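/- Decoupling lemma: let P and P' be two probability distributions over random variables (Y, X_0, X_1, …, X_k) such that (a) under both P and P', the variables X_0, X_1, …, X_k are conditionally independent and identically distributed given Y, and (b) the conditionals P(Y | X_0) and P'(Y | X_0) coincide almost surely. Then TV(P(X_0,…,X_k) ∥ P'(X_0,…,X_k)) ≤ (2k+3)·TV(P(X_0) ∥ P'(X_0)). -/

import Mathlib

/-!
Let `μ, μ'` be the laws of `X₀` and `ν, ν'` those of `Y`. Under both distributions the joint
law of `(Y, X₀)` is the image of the law of `X₀` under the same kernel `x ↦ δₓ ⊗ κ x`, so by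
data processing `TV(ν, ν')` and `TV(ν ⊗ ρ, ν' ⊗ ρ')` are at most `TV(μ, μ')`, and by the
triangle inequality `TV(ν' ⊗ ρ, ν' ⊗ ρ') ≤ 2 TV(μ, μ')`. The total variation between joint
laws with conditionally independent coordinates is subadditive over the coordinates, so
replacing `ρ` by `ρ'` in all `k + 1` coordinates under `ν'` costs at most
`2 (k + 1) TV(μ, μ')`, and replacing `ν` by `ν'` one more `TV(μ, μ')`.
-/

open MeasureTheory ProbabilityTheory

noncomputable section

/-- Total variation distance between two measures: supremum over measurable events of the
difference of probabilities. -/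
def TV {Ω : Type*} [MeasurableSpace Ω] (P Q : Measure Ω) : ℝ :=
  ⨆ s : {s : Set Ω // MeasurableSet s}, |(P s.1).toReal - (Q s.1).toReal|

/-- The joint law of `(a, b)` where `a ∼ ν` and `b ∼ κ a`.  Saying that
`P.map Prod.swap = withKernel (P.map Prod.snd) κ` expresses that `κ` is a regular conditional
distribution (disintegration) of the first coordinate given the second under `P`. -/
def withKernel {α β : Type*} [MeasurableSpace α] [MeasurableSpace β]
    (ν : Measure α) (κ : Kernel α β) : Measure (α × β) :=
  ν.bind fun a => (κ a).map fun b => (a, b)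

section TotalVariation

variable {α β : Type*} [MeasurableSpace α] [MeasurableSpace β] {μ ν : Measure α}

lemma abs_sub_le_TV [IsProbabilityMeasure μ] [IsProbabilityMeasure ν] {s : Set α}
    (hs : MeasurableSet s) : |(μ s).toReal - (ν s).toReal| ≤ TV μ ν := by
  refine le_ciSup (f := fun t : {s : Set α // MeasurableSet s} =>
    |(μ t.1).toReal - (ν t.1).toReal|) ⟨1, ?_⟩ ⟨s, hs⟩
  rintro _ ⟨t, rfl⟩
  simp only [← measureReal_def]
  have hμ := measureReal_le_one (μ := μ) (s := t.1)
  have hν := measureReal_le_one (μ := ν) (s := t.1)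
  exact abs_sub_le_iff.2 ⟨by linarith [measureReal_nonneg (μ := ν) (s := t.1)],
    by linarith [measureReal_nonneg (μ := μ) (s := t.1)]⟩

lemma TV_le {c : ℝ} (h : ∀ s, MeasurableSet s → |(μ s).toReal - (ν s).toReal| ≤ c) :
    TV μ ν ≤ c :=
  have : Nonempty {s : Set α // MeasurableSet s} := ⟨⟨∅, .empty⟩⟩
  ciSup_le fun s => h s.1 s.2

lemma TV_comm (μ ν : Measure α) : TV μ ν = TV ν μ :=
  iSup_congr fun _ => abs_sub_comm _ _

lemma TV_triangle (μ ν ξ : Measure α) [IsProbabilityMeasure μ] [IsProbabilityMeasure ν]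
    [IsProbabilityMeasure ξ] : TV μ ξ ≤ TV μ ν + TV ν ξ :=
  TV_le fun _ hs => (abs_sub_le _ _ _).trans (add_le_add (abs_sub_le_TV hs) (abs_sub_le_TV hs))

lemma TV_map_le [IsProbabilityMeasure μ] [IsProbabilityMeasure ν] {f : α → β}
    (hf : Measurable f) : TV (μ.map f) (ν.map f) ≤ TV μ ν :=
  TV_le fun s hs => by
    rw [Measure.map_apply hf hs, Measure.map_apply hf hs]
    exact abs_sub_le_TV (hf hs)

/-- Compare `f` with `1` on a Hahn set of `(ν, μ)` and with `0` off it. -/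
lemma integral_sub_integral_le_TV [IsProbabilityMeasure μ] [IsProbabilityMeasure ν]
    {f : α → ℝ} (hf : Measurable f) (hf₀ : ∀ x, 0 ≤ f x) (hf₁ : ∀ x, f x ≤ 1) :
    ∫ x, f x ∂μ - ∫ x, f x ∂ν ≤ TV μ ν := by
  obtain ⟨H, hH, hνμ, hμν⟩ := exists_isHahnDecomposition ν μ
  have hint : ∀ ξ : Measure α, [IsFiniteMeasure ξ] → Integrable f ξ := fun ξ _ =>
    (integrable_const (1 : ℝ)).mono' hf.aestronglyMeasurable
      (.of_forall fun x => by simpa [abs_of_nonneg (hf₀ x)] using hf₁ x)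
  have hon : ∫ x in H, (1 - f x) ∂ν ≤ ∫ x in H, (1 - f x) ∂μ :=
    integral_mono_measure hνμ (.of_forall fun x => sub_nonneg.2 (hf₁ x))
      ((integrable_const 1).sub (hint _))
  have hoff : ∫ x in Hᶜ, f x ∂μ ≤ ∫ x in Hᶜ, f x ∂ν :=
    integral_mono_measure hμν (.of_forall hf₀) (hint _)
  rw [integral_sub (integrable_const 1) (hint _), integral_sub (integrable_const 1) (hint _)]
    at hon
  rw [← integral_add_compl hH (hint μ), ← integral_add_compl hH (hint ν)]
  have hTV := (le_abs_self _).trans (abs_sub_le_TV (μ := μ) (ν := ν) hH)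
  simp only [integral_const, smul_eq_mul, mul_one, measureReal_def,
    Measure.restrict_apply_univ] at hon
  linarith

lemma toReal_comp_apply (κ : Kernel α β) [IsFiniteKernel κ] {s : Set β}
    (hs : MeasurableSet s) : ((κ ∘ₘ μ) s).toReal = ∫ a, (κ a s).toReal ∂μ := by
  rw [Measure.bind_apply hs κ.aemeasurable,
    integral_toReal (κ.measurable_coe hs).aemeasurable (.of_forall fun _ => measure_lt_top _ _)]

lemma TV_comp_le [IsProbabilityMeasure μ] [IsProbabilityMeasure ν] (κ : Kernel α β)
    [IsMarkovKernel κ] : TV (κ ∘ₘ μ) (κ ∘ₘ ν) ≤ TV μ ν := by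
  refine TV_le fun s hs => ?_
  have hf := (κ.measurable_coe hs).ennreal_toReal
  have h₀ : ∀ a, 0 ≤ (κ a s).toReal := fun _ => ENNReal.toReal_nonneg
  have h₁ : ∀ a, (κ a s).toReal ≤ 1 := fun _ => measureReal_le_one
  rw [toReal_comp_apply κ hs, toReal_comp_apply κ hs, abs_sub_le_iff]
  exact ⟨integral_sub_integral_le_TV hf h₀ h₁,
    TV_comm ν μ ▸ integral_sub_integral_le_TV hf h₀ h₁⟩

end TotalVariation

namespace ProbabilityTheory.Kernel

variable {β γ δ ζ : Type*} [MeasurableSpace β] [MeasurableSpace γ] [MeasurableSpace δ]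
  [MeasurableSpace ζ] {ι : Type*} [Fintype ι]

lemma compProd_prodMkRight (κ : Kernel γ β) [IsSFiniteKernel κ] (η : Kernel γ ζ)
    [IsSFiniteKernel η] : κ ⊗ₖ η.prodMkRight β = κ ×ₖ η := by
  ext a s hs
  rw [compProd_apply hs, prod_apply' _ _ _ hs]
  rfl

def pi (ρ : ι → Kernel γ δ) [∀ i, IsMarkovKernel (ρ i)] : Kernel γ (ι → δ) where
  toFun y := Measure.pi fun i => ρ i y
  measurable' := by
    refine .measure_of_isPiSystem_of_isProbabilityMeasure generateFrom_pi.symm isPiSystem_pi ?_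
    rintro _ ⟨t, ht, rfl⟩
    simp_rw [Measure.pi_pi]
    exact Finset.measurable_prod _ fun i _ => (ρ i).measurable_coe (ht i trivial)

variable (ρ : ι → Kernel γ δ) [∀ i, IsMarkovKernel (ρ i)]

lemma pi_apply (y : γ) : pi ρ y = Measure.pi fun i => ρ i y := rfl

instance : IsMarkovKernel (pi ρ) := ⟨fun y => by rw [pi_apply]; infer_instance⟩

lemma map_pi_eval [DecidableEq ι] (i : ι) : (pi ρ).map (Function.eval i) = ρ i := by
  ext y : 1
  simp [map_apply _ (measurable_pi_apply i), pi_apply, Measure.pi_map_eval]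

lemma pi_eq_map_prod_pi_succ {n : ℕ} (ρ : Fin (n + 1) → Kernel γ δ)
    [∀ i, IsMarkovKernel (ρ i)] :
    pi ρ = (ρ 0 ×ₖ pi fun i => ρ i.succ).map
      (MeasurableEquiv.piFinSuccAbove (fun _ => δ) 0).symm := by
  ext y : 1
  rw [map_apply _ (MeasurableEquiv.measurable _), prod_apply, pi_apply, pi_apply]
  simpa using ((measurePreserving_piFinSuccAbove (fun i => ρ i y) 0).symm _).map_eq.symm

end ProbabilityTheory.Kernel

section Tensorization

variable {β γ δ ζ : Type*} [MeasurableSpace β] [MeasurableSpace γ] [MeasurableSpace δ]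
  [MeasurableSpace ζ]

lemma TV_compProd_le (μ ν : Measure γ) [IsProbabilityMeasure μ] [IsProbabilityMeasure ν]
    (κ : Kernel γ β) [IsMarkovKernel κ] : TV (μ ⊗ₘ κ) (ν ⊗ₘ κ) ≤ TV μ ν := by
  rw [Measure.compProd_eq_comp_prod, Measure.compProd_eq_comp_prod]
  exact TV_comp_le _

lemma TV_compProd_prod_left_le (ν : Measure γ) [IsProbabilityMeasure ν]
    (κ κ' : Kernel γ β) [IsMarkovKernel κ] [IsMarkovKernel κ'] (η : Kernel γ ζ)
    [IsMarkovKernel η] :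
    TV (ν ⊗ₘ (κ ×ₖ η)) (ν ⊗ₘ (κ' ×ₖ η)) ≤ TV (ν ⊗ₘ κ) (ν ⊗ₘ κ') := by
  simp_rw [← Kernel.compProd_prodMkRight, ← Measure.compProd_assoc']
  exact (TV_map_le MeasurableEquiv.prodAssoc.measurable).trans (TV_compProd_le _ _ _)

lemma TV_compProd_prod_le (ν : Measure γ) [IsProbabilityMeasure ν]
    (κ κ' : Kernel γ β) [IsMarkovKernel κ] [IsMarkovKernel κ']
    (η η' : Kernel γ ζ) [IsMarkovKernel η] [IsMarkovKernel η'] :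
    TV (ν ⊗ₘ (κ ×ₖ η)) (ν ⊗ₘ (κ' ×ₖ η')) ≤ TV (ν ⊗ₘ κ) (ν ⊗ₘ κ') + TV (ν ⊗ₘ η) (ν ⊗ₘ η') := by
  have hswap : TV (ν ⊗ₘ (κ' ×ₖ η)) (ν ⊗ₘ (κ' ×ₖ η')) ≤ TV (ν ⊗ₘ η) (ν ⊗ₘ η') := by
    simp_rw [← Kernel.map_prod_swap _ κ', Measure.compProd_map measurable_swap]
    exact (TV_map_le (measurable_id.prodMap measurable_swap)).trans
      (TV_compProd_prod_left_le _ _ _ _)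
  exact (TV_triangle _ (ν ⊗ₘ (κ' ×ₖ η)) _).trans
    (add_le_add (TV_compProd_prod_left_le _ _ _ _) hswap)

lemma TV_compProd_pi_le (ν : Measure γ) [IsProbabilityMeasure ν] :
    ∀ {n : ℕ} (ρ ρ' : Fin n → Kernel γ δ) [∀ i, IsMarkovKernel (ρ i)]
      [∀ i, IsMarkovKernel (ρ' i)],
      TV (ν ⊗ₘ Kernel.pi ρ) (ν ⊗ₘ Kernel.pi ρ') ≤ ∑ i, TV (ν ⊗ₘ ρ i) (ν ⊗ₘ ρ' i)
  | 0, ρ, ρ', _, _ => by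
    have : Kernel.pi ρ = Kernel.pi ρ' := by
      ext y : 1
      rw [Kernel.pi_apply, Kernel.pi_apply, Measure.pi_of_empty, Measure.pi_of_empty]
    exact TV_le fun s _ => by simp [this]
  | n + 1, ρ, ρ', _, _ => by
    rw [Kernel.pi_eq_map_prod_pi_succ ρ, Kernel.pi_eq_map_prod_pi_succ ρ',
      Measure.compProd_map (MeasurableEquiv.measurable _),
      Measure.compProd_map (MeasurableEquiv.measurable _), Fin.sum_univ_succ]
    exact (TV_map_le (measurable_id.prodMap (MeasurableEquiv.measurable _))).trans
      ((TV_compProd_prod_le _ _ _ _ _).trans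
        (add_le_add le_rfl (TV_compProd_pi_le ν (fun i => ρ i.succ) fun i => ρ' i.succ)))

lemma TV_comp_pi_le (ν ν' : Measure γ) [IsProbabilityMeasure ν] [IsProbabilityMeasure ν']
    (ρ ρ' : Kernel γ δ) [IsMarkovKernel ρ] [IsMarkovKernel ρ'] (n : ℕ) :
    TV (Kernel.pi (fun _ : Fin n => ρ) ∘ₘ ν) (Kernel.pi (fun _ : Fin n => ρ') ∘ₘ ν') ≤
      TV ν ν' + n * TV (ν' ⊗ₘ ρ) (ν' ⊗ₘ ρ') := by
  have hmix : TV (Kernel.pi (fun _ : Fin n => ρ) ∘ₘ ν') (Kernel.pi (fun _ : Fin n => ρ') ∘ₘ ν') ≤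
      n * TV (ν' ⊗ₘ ρ) (ν' ⊗ₘ ρ') := by
    rw [← Measure.snd_compProd, ← Measure.snd_compProd]
    refine (TV_map_le measurable_snd).trans ?_
    simpa using TV_compProd_pi_le ν' (fun _ : Fin n => ρ) fun _ => ρ'
  exact (TV_triangle _ _ _).trans (add_le_add (TV_comp_le _) hmix)

theorem TV_comp_pi_le_of_compProd_eq_map_swap {μ μ' : Measure δ} [IsProbabilityMeasure μ]
    [IsProbabilityMeasure μ'] {ν ν' : Measure γ} [IsProbabilityMeasure ν]
    [IsProbabilityMeasure ν'] {ρ ρ' : Kernel γ δ} [IsMarkovKernel ρ] [IsMarkovKernel ρ']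
    {κ : Kernel δ γ} [IsMarkovKernel κ] (h : ν ⊗ₘ ρ = (μ ⊗ₘ κ).map Prod.swap)
    (h' : ν' ⊗ₘ ρ' = (μ' ⊗ₘ κ).map Prod.swap) (n : ℕ) :
    TV (Kernel.pi (fun _ : Fin n => ρ) ∘ₘ ν) (Kernel.pi (fun _ : Fin n => ρ') ∘ₘ ν') ≤
      (2 * n + 1) * TV μ μ' := by
  have hν : TV ν ν' ≤ TV μ μ' := by
    rw [← Measure.fst_compProd ν ρ, ← Measure.fst_compProd ν' ρ', h, h', Measure.fst_map_swap,
      Measure.fst_map_swap, Measure.snd_compProd, Measure.snd_compProd]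
    exact TV_comp_le κ
  have hjoint : TV (ν ⊗ₘ ρ) (ν' ⊗ₘ ρ') ≤ TV μ μ' := by
    rw [h, h']
    exact (TV_map_le measurable_swap).trans (TV_compProd_le _ _ _)
  have hone : TV (ν' ⊗ₘ ρ) (ν' ⊗ₘ ρ') ≤ 2 * TV μ μ' :=
    calc TV (ν' ⊗ₘ ρ) (ν' ⊗ₘ ρ') ≤ TV (ν' ⊗ₘ ρ) (ν ⊗ₘ ρ) + TV (ν ⊗ₘ ρ) (ν' ⊗ₘ ρ') :=
          TV_triangle _ _ _
      _ ≤ TV ν' ν + TV μ μ' := add_le_add (TV_compProd_le _ _ _) hjoint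
      _ ≤ 2 * TV μ μ' := by rw [TV_comm]; linarith
  calc _ ≤ TV ν ν' + n * TV (ν' ⊗ₘ ρ) (ν' ⊗ₘ ρ') := TV_comp_pi_le _ _ _ _ _
    _ ≤ TV μ μ' + n * (2 * TV μ μ') := by gcongr
    _ = (2 * n + 1) * TV μ μ' := by ring

end Tensorization

section Disintegration

variable {β γ δ ι : Type*} [MeasurableSpace β] [MeasurableSpace γ] [MeasurableSpace δ]
  [Fintype ι]

lemma withKernel_eq_compProd (μ : Measure γ) [SFinite μ] (κ : Kernel γ β) [IsSFiniteKernel κ] :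
    withKernel μ κ = μ ⊗ₘ κ := by
  rw [Measure.compProd_eq_comp_prod]
  refine congrArg μ.bind (funext fun a => ?_)
  rw [Kernel.prod_apply, Kernel.id_apply, Measure.dirac_prod]

lemma map_snd_eq_comp_of_eq_compProd {P : Measure (γ × δ)} [SFinite P]
    {η : Kernel γ δ} [IsSFiniteKernel η] (h : P = P.map Prod.fst ⊗ₘ η) :
    P.map Prod.snd = η ∘ₘ P.map Prod.fst := by
  conv_lhs => rw [h]
  exact Measure.snd_compProd _ _

lemma map_prod_eval_eq_compProd {P : Measure (γ × (ι → δ))} [SFinite P]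
    {ρ : ι → Kernel γ δ} [∀ i, IsMarkovKernel (ρ i)]
    (h : P = P.map Prod.fst ⊗ₘ Kernel.pi ρ) (i : ι) :
    P.map (fun p => (p.1, p.2 i)) = P.map Prod.fst ⊗ₘ ρ i := by
  classical
  conv_lhs => rw [h]
  rw [← Kernel.map_pi_eval ρ i, Measure.compProd_map (measurable_pi_apply i)]
  rfl

lemma map_fst_compProd_eq_map_swap {P : Measure (γ × (ι → δ))} [SFinite P]
    {ρ : Kernel γ δ} [IsMarkovKernel ρ] {κ : Kernel δ γ} (i : ι)
    (hiid : P = P.map Prod.fst ⊗ₘ Kernel.pi fun _ => ρ)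
    (hcond : P.map (fun p => (p.2 i, p.1)) = P.map (fun p => p.2 i) ⊗ₘ κ) :
    P.map Prod.fst ⊗ₘ ρ = (P.map (fun p => p.2 i) ⊗ₘ κ).map Prod.swap := by
  rw [← hcond, Measure.map_map measurable_swap (by fun_prop)]
  exact (map_prod_eval_eq_compProd hiid i).symm

end Disintegration

theorem stmt15 {γ δ : Type*} [MeasurableSpace γ] [MeasurableSpace δ] (k : ℕ)
    (P P' : Measure (γ × (Fin (k + 1) → δ)))
    [IsProbabilityMeasure P] [IsProbabilityMeasure P']
    (ρ ρ' : Kernel γ δ) (hρ : IsMarkovKernel ρ) (hρ' : IsMarkovKernel ρ')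
    (hPiid : P = (P.map Prod.fst).bind fun y =>
      (Measure.pi fun _ : Fin (k + 1) => ρ y).map fun xs => (y, xs))
    (hP'iid : P' = (P'.map Prod.fst).bind fun y =>
      (Measure.pi fun _ : Fin (k + 1) => ρ' y).map fun xs => (y, xs))
    (κ : Kernel δ γ) (hκ : IsMarkovKernel κ)
    (hcond : P.map (fun p => (p.2 0, p.1)) = withKernel (P.map fun p => p.2 0) κ)
    (hcond' : P'.map (fun p => (p.2 0, p.1)) = withKernel (P'.map fun p => p.2 0) κ) :
    TV (P.map Prod.snd) (P'.map Prod.snd) ≤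
      (2 * (k : ℝ) + 3) * TV (P.map fun p => p.2 0) (P'.map fun p => p.2 0) := by
  have := hρ; have := hρ'; have := hκ
  have hX₀ : Measurable fun p : γ × (Fin (k + 1) → δ) => p.2 0 := by fun_prop
  have := Measure.isProbabilityMeasure_map (μ := P) hX₀.aemeasurable
  have := Measure.isProbabilityMeasure_map (μ := P') hX₀.aemeasurable
  have := Measure.isProbabilityMeasure_map (μ := P) measurable_fst.aemeasurable
  have := Measure.isProbabilityMeasure_map (μ := P') measurable_fst.aemeasurable
  have hiid : P = P.map Prod.fst ⊗ₘ Kernel.pi fun _ => ρ := by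
    rw [← withKernel_eq_compProd]; exact hPiid
  have hiid' : P' = P'.map Prod.fst ⊗ₘ Kernel.pi fun _ => ρ' := by
    rw [← withKernel_eq_compProd]; exact hP'iid
  rw [withKernel_eq_compProd] at hcond hcond'
  rw [map_snd_eq_comp_of_eq_compProd hiid, map_snd_eq_comp_of_eq_compProd hiid']
  convert TV_comp_pi_le_of_compProd_eq_map_swap (map_fst_compProd_eq_map_swap 0 hiid hcond)
    (map_fst_compProd_eq_map_swap 0 hiid' hcond') (k + 1) using 2
  push_cast; ring

end
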